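/- Consistency of expression-provenance extraction: if |γ̂|, e ⇓ v, T (i.e., the expression e evaluates in the erased environment |γ̂| to value v producing trace T), then for any valuation h that is consistent with the annotated environment γ̂, h is also consistent with the expression-provenance extraction E(T, γ̂). -/

import Mathlib

namespace Prov

abbrev Var := String
abbrev Loc := ℕ

/-- Expressions of the call-by-value core calculus. -/
inductive Expr : Type where
  | var : Var → Expr
  | const : ℕ → Expr
  | prim : String → List Expr → Expr
  | pair : Expr → Expr → Expr
  | fst : Expr → Expr
  | snd : Expr → Expr
  | inl : Expr → Expr
  | inr : Expr → Expr
  | case : Expr → Var → Expr → Var → Expr → Expr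
  | fn : Var → Var → Expr → Expr
  | app : Expr → Expr → Expr
  | roll : Expr → Expr
  | unroll : Expr → Expr
  | letin : Var → Expr → Expr → Expr

/-- Values; closures record a recursive function `fun f(x).e` and an environment. -/
inductive Val : Type where
  | const : ℕ → Val
  | pair : Val → Val → Val
  | inl : Val → Val
  | inr : Val → Val
  | roll : Val → Val
  | closure : Var → Var → Expr → (Var → Val) → Val

abbrev Env := Var → Val

def upd {α : Type} (γ : Var → α) (x : Var) (v : α) : Var → α :=
  fun y => if y = x then v else γ y

/-- Traces (possibly containing holes, used for trace slices). -/
inductive Trace : Type where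
  | hole : Trace
  | var : Var → Trace
  | const : ℕ → Trace
  | prim : String → List Trace → Trace
  | letT : Trace → Var → Trace → Trace
  | pair : Trace → Trace → Trace
  | fst : Trace → Trace
  | snd : Trace → Trace
  | inl : Trace → Trace
  | inr : Trace → Trace
  | caseL : Trace → Var → Expr → Var → Expr → Trace → Trace
  | caseR : Trace → Var → Expr → Var → Expr → Trace → Trace
  | fn : Var → Var → Expr → Trace
  | app : Var → Var → Expr → Trace → Trace → Trace → Trace
  | roll : Trace → Trace
  | unroll : Trace → Trace

mutual
/-- Tracing evaluation judgment `γ, e ⇓ v, T`, parameterized by the semantic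
interpretation `ps` of primitive operations (which return constants). -/
inductive Eval (ps : String → List Val → ℕ) : Env → Expr → Val → Trace → Prop where
  | var : Eval ps γ (.var x) (γ x) (.var x)
  | const : Eval ps γ (.const c) (.const c) (.const c)
  | prim : EvalList ps γ es vs Ts → Eval ps γ (.prim op es) (.const (ps op vs)) (.prim op Ts)
  | pair : Eval ps γ e1 v1 T1 → Eval ps γ e2 v2 T2 →
      Eval ps γ (.pair e1 e2) (.pair v1 v2) (.pair T1 T2)
  | fst : Eval ps γ e (.pair v1 v2) T → Eval ps γ (.fst e) v1 (.fst T)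
  | snd : Eval ps γ e (.pair v1 v2) T → Eval ps γ (.snd e) v2 (.snd T)
  | inl : Eval ps γ e v T → Eval ps γ (.inl e) (.inl v) (.inl T)
  | inr : Eval ps γ e v T → Eval ps γ (.inr e) (.inr v) (.inr T)
  | caseL : Eval ps γ e (.inl v) T → Eval ps (upd γ x1 v) e1 v1 T1 →
      Eval ps γ (.case e x1 e1 x2 e2) v1 (.caseL T x1 e1 x2 e2 T1)
  | caseR : Eval ps γ e (.inr v) T → Eval ps (upd γ x2 v) e2 v2 T2 →
      Eval ps γ (.case e x1 e1 x2 e2) v2 (.caseR T x1 e1 x2 e2 T2)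
  | fn : Eval ps γ (.fn f x e) (.closure f x e γ) (.fn f x e)
  | app : Eval ps γ e1 (.closure f x e γ0) T1 → Eval ps γ e2 v2 T2 →
      Eval ps (upd (upd γ0 x v2) f (.closure f x e γ0)) e v T →
      Eval ps γ (.app e1 e2) v (.app f x e T1 T2 T)
  | roll : Eval ps γ e v T → Eval ps γ (.roll e) (.roll v) (.roll T)
  | unroll : Eval ps γ e (.roll v) T → Eval ps γ (.unroll e) v (.unroll T)
  | letin : Eval ps γ e1 v1 T1 → Eval ps (upd γ x v1) e2 v2 T2 →
      Eval ps γ (.letin x e1 e2) v2 (.letT T1 x T2)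

inductive EvalList (ps : String → List Val → ℕ) : Env → List Expr → List Val → List Trace → Prop where
  | nil : EvalList ps γ [] [] []
  | cons : Eval ps γ e v T → EvalList ps γ es vs Ts →
      EvalList ps γ (e :: es) (v :: vs) (T :: Ts)
end

mutual
/-- Replay judgment `γ, T ↷ v`. -/
inductive Replay (ps : String → List Val → ℕ) : Env → Trace → Val → Prop where
  | var : Replay ps γ (.var x) (γ x)
  | const : Replay ps γ (.const c) (.const c)
  | prim : ReplayList ps γ Ts vs → Replay ps γ (.prim op Ts) (.const (ps op vs))
  | pair : Replay ps γ T1 v1 → Replay ps γ T2 v2 → Replay ps γ (.pair T1 T2) (.pair v1 v2)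
  | fst : Replay ps γ T (.pair v1 v2) → Replay ps γ (.fst T) v1
  | snd : Replay ps γ T (.pair v1 v2) → Replay ps γ (.snd T) v2
  | inl : Replay ps γ T v → Replay ps γ (.inl T) (.inl v)
  | inr : Replay ps γ T v → Replay ps γ (.inr T) (.inr v)
  | caseL : Replay ps γ T (.inl v) → Replay ps (upd γ x1 v) T1 v1 →
      Replay ps γ (.caseL T x1 e1 x2 e2 T1) v1
  | caseR : Replay ps γ T (.inr v) → Replay ps (upd γ x2 v) T2 v2 →
      Replay ps γ (.caseR T x1 e1 x2 e2 T2) v2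
  | fn : Replay ps γ (.fn f x e) (.closure f x e γ)
  | app : Replay ps γ T1 (.closure f x e γ0) → Replay ps γ T2 v2 →
      Replay ps (upd (upd γ0 x v2) f (.closure f x e γ0)) T v →
      Replay ps γ (.app f x e T1 T2 T) v
  | roll : Replay ps γ T v → Replay ps γ (.roll T) (.roll v)
  | unroll : Replay ps γ T (.roll v) → Replay ps γ (.unroll T) v
  | letT : Replay ps γ T1 v1 → Replay ps (upd γ x v1) T2 v2 →
      Replay ps γ (.letT T1 x T2) v2

inductive ReplayList (ps : String → List Val → ℕ) : Env → List Trace → List Val → Prop where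
  | nil : ReplayList ps γ [] []
  | cons : Replay ps γ T v → ReplayList ps γ Ts vs → ReplayList ps γ (T :: Ts) (v :: vs)
end

/-- Values annotated (on every constructor) with annotations from `A`. -/
inductive AVal (A : Type) : Type where
  | const : ℕ → A → AVal A
  | pair : AVal A → AVal A → A → AVal A
  | inl : AVal A → A → AVal A
  | inr : AVal A → A → AVal A
  | roll : AVal A → A → AVal A
  | closure : Var → Var → Expr → (Var → AVal A) → A → AVal A

abbrev AEnv (A : Type) := Var → AVal A

/-- Erasure of annotations. -/
def erase {A : Type} : AVal A → Val
  | .const c _ => .const c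
  | .pair v1 v2 _ => .pair (erase v1) (erase v2)
  | .inl v _ => .inl (erase v)
  | .inr v _ => .inr (erase v)
  | .roll v _ => .roll (erase v)
  | .closure f x e ρ _ => .closure f x e (fun y => erase (ρ y))

def eraseEnv {A : Type} (γ : AEnv A) : Env := fun x => erase (γ x)

/-- Top-level annotation of an annotated value. -/
def annOf {A : Type} : AVal A → A
  | .const _ a => a
  | .pair _ _ a => a
  | .inl _ a => a
  | .inr _ a => a
  | .roll _ a => a
  | .closure _ _ _ _ a => a


/-! ### Expression provenance -/

/-- Provenance terms: input locations, the trivial annotation `⊥`, and applied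
primitive-operation symbols `⊕(t₁,…,tₙ)`. -/
inductive PTerm : Type where
  | bot : PTerm
  | loc : Loc → PTerm
  | prim : String → List PTerm → PTerm

mutual
/-- The expression-provenance extraction function `E(T, γ̂)`, presented as a relation
`EEx ps T γ̂ v̂` meaning `E(T, γ̂) = v̂`.  Newly constructed values are annotated `⊥`;
a primitive-operation trace `⊕(T₁,…,Tₙ)` whose sub-extractions yield values `vᵢ`
annotated `tᵢ` produces `⊕̂(v₁,…,vₙ)` annotated `⊕(t₁,…,tₙ)`. -/
inductive EEx (ps : String → List Val → ℕ) : Trace → AEnv PTerm → AVal PTerm → Prop where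
  | var : EEx ps (.var x) γ (γ x)
  | const : EEx ps (.const c) γ (.const c .bot)
  | prim : EExList ps Ts γ vs →
      EEx ps (.prim op Ts) γ (.const (ps op (vs.map erase)) (.prim op (vs.map annOf)))
  | pair : EEx ps T1 γ v1 → EEx ps T2 γ v2 → EEx ps (.pair T1 T2) γ (.pair v1 v2 .bot)
  | fst : EEx ps T γ (.pair v1 v2 a) → EEx ps (.fst T) γ v1
  | snd : EEx ps T γ (.pair v1 v2 a) → EEx ps (.snd T) γ v2
  | inl : EEx ps T γ v → EEx ps (.inl T) γ (.inl v .bot)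
  | inr : EEx ps T γ v → EEx ps (.inr T) γ (.inr v .bot)
  | caseL : EEx ps T γ (.inl v a) → EEx ps T1 (upd γ x1 v) v1 →
      EEx ps (.caseL T x1 e1 x2 e2 T1) γ v1
  | caseR : EEx ps T γ (.inr v a) → EEx ps T2 (upd γ x2 v) v2 →
      EEx ps (.caseR T x1 e1 x2 e2 T2) γ v2
  | fn : EEx ps (.fn f x e) γ (.closure f x e γ .bot)
  | app : EEx ps T1 γ (.closure f x e γ0 a) → EEx ps T2 γ v2 →
      EEx ps T (upd (upd γ0 x v2) f (.closure f x e γ0 a)) v →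
      EEx ps (.app f x e T1 T2 T) γ v
  | roll : EEx ps T γ v → EEx ps (.roll T) γ (.roll v .bot)
  | unroll : EEx ps T γ (.roll v a) → EEx ps (.unroll T) γ v
  | letT : EEx ps T1 γ v1 → EEx ps T2 (upd γ x v1) v2 → EEx ps (.letT T1 x T2) γ v2

inductive EExList (ps : String → List Val → ℕ) :
    List Trace → AEnv PTerm → List (AVal PTerm) → Prop where
  | nil : EExList ps [] γ []
  | cons : EEx ps T γ v → EExList ps Ts γ vs → EExList ps (T :: Ts) γ (v :: vs)
end

mutual
/-- Homomorphic extension `h(t)` of a valuation `h : Loc → Val` to provenance terms;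
`h(⊕(t₁,…,tₙ)) = ⊕̂(h(t₁),…,h(tₙ))`.  (`h(⊥)` is undefined: there is no rule for `⊥`.) -/
inductive HEval (ps : String → List Val → ℕ) (h : Loc → Val) : PTerm → Val → Prop where
  | loc : HEval ps h (.loc l) (h l)
  | prim : HEvalList ps h ts vs → HEval ps h (.prim op ts) (.const (ps op vs))

inductive HEvalList (ps : String → List Val → ℕ) (h : Loc → Val) :
    List PTerm → List Val → Prop where
  | nil : HEvalList ps h [] []
  | cons : HEval ps h t v → HEvalList ps h ts vs → HEvalList ps h (t :: ts) (v :: vs)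
end

/-- `h` is consistent with the annotation `t` of a value `v`: `h(t) = v` whenever
`h(t)` is defined. -/
def ConsAnn (ps : String → List Val → ℕ) (h : Loc → Val) (t : PTerm) (v : Val) : Prop :=
  ∀ w, HEval ps h t w → w = v

/-- `h` is consistent with an annotated value if it is consistent with every
annotated subvalue. -/
inductive ConsVal (ps : String → List Val → ℕ) (h : Loc → Val) : AVal PTerm → Prop where
  | const : ConsAnn ps h t (.const c) → ConsVal ps h (.const c t)
  | pair : ConsVal ps h v1 → ConsVal ps h v2 →
      ConsAnn ps h t (erase (AVal.pair v1 v2 t)) → ConsVal ps h (.pair v1 v2 t)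
  | inl : ConsVal ps h v → ConsAnn ps h t (erase (AVal.inl v t)) → ConsVal ps h (.inl v t)
  | inr : ConsVal ps h v → ConsAnn ps h t (erase (AVal.inr v t)) → ConsVal ps h (.inr v t)
  | roll : ConsVal ps h v → ConsAnn ps h t (erase (AVal.roll v t)) → ConsVal ps h (.roll v t)
  | closure : (∀ y, ConsVal ps h (ρ y)) →
      ConsAnn ps h t (erase (AVal.closure f x e ρ t)) → ConsVal ps h (.closure f x e ρ t)

/-
Extraction returns either a subvalue of the environment or of an earlier extraction, a value
freshly built with annotation `⊥` (which `h` never evaluates, so it imposes no constraint), or a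
primitive result annotated `⊕(t₁,…,tₙ)`. In the last case `h(⊕(t₁,…,tₙ)) = ⊕̂(h(t₁),…,h(tₙ))`,
and by induction each `h(tᵢ)` is the erasure of the i-th argument, which is exactly how the
result value `⊕̂(|v₁|,…,|vₙ|)` was computed. Hence consistency propagates along extraction.
-/

section Consistency

variable {ps : String → List Val → ℕ} {h : Loc → Val}

theorem consAnn_bot (v : Val) : ConsAnn ps h .bot v := fun _ hw => nomatch hw

theorem ConsVal.consAnn_annOf {v : AVal PTerm} (hv : ConsVal ps h v) :
    ConsAnn ps h (annOf v) (erase v) := by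
  cases hv <;> assumption

theorem eq_map_erase_of_hevalList {vs : List (AVal PTerm)} (hvs : ∀ v ∈ vs, ConsVal ps h v)
    {ws : List Val} (hws : HEvalList ps h (vs.map annOf) ws) : ws = vs.map erase := by
  induction vs generalizing ws with
  | nil => cases hws; rfl
  | cons v vs ih =>
    cases hws with
    | cons hw hws =>
      rw [List.map_cons, (hvs v List.mem_cons_self).consAnn_annOf _ hw,
        ih (fun u hu => hvs u (List.mem_cons_of_mem v hu)) hws]

theorem consVal_prim (op : String) {vs : List (AVal PTerm)} (hvs : ∀ v ∈ vs, ConsVal ps h v) :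
    ConsVal ps h (.const (ps op (vs.map erase)) (.prim op (vs.map annOf))) :=
  .const fun _ hw => by
    cases hw with
    | prim hws => rw [eq_map_erase_of_hevalList hvs hws]

theorem consVal_upd {γ : AEnv PTerm} (hγ : ∀ y, ConsVal ps h (γ y)) (x : Var)
    {v : AVal PTerm} (hv : ConsVal ps h v) (y : Var) : ConsVal ps h (upd γ x v y) := by
  unfold upd
  split
  · exact hv
  · exact hγ y

theorem EEx.consVal {T : Trace} {γ : AEnv PTerm} {v : AVal PTerm} (hE : EEx ps T γ v)
    (hγ : ∀ y, ConsVal ps h (γ y)) : ConsVal ps h v := by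
  induction hE using EEx.rec
    (motive_2 := fun _ γ vs _ => (∀ y, ConsVal ps h (γ y)) → ∀ v ∈ vs, ConsVal ps h v) with
  | var => exact hγ _
  | const => exact .const (consAnn_bot _)
  | prim _ ih => exact consVal_prim _ (ih hγ)
  | pair _ _ ih1 ih2 => exact .pair (ih1 hγ) (ih2 hγ) (consAnn_bot _)
  | fst _ ih => cases ih hγ with | pair hv1 _ _ => exact hv1
  | snd _ ih => cases ih hγ with | pair _ hv2 _ => exact hv2
  | inl _ ih => exact .inl (ih hγ) (consAnn_bot _)
  | inr _ ih => exact .inr (ih hγ) (consAnn_bot _)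
  | caseL _ _ ihScrut ihBranch =>
    cases ihScrut hγ with
    | inl hv _ => exact ihBranch (consVal_upd hγ _ hv)
  | caseR _ _ ihScrut ihBranch =>
    cases ihScrut hγ with
    | inr hv _ => exact ihBranch (consVal_upd hγ _ hv)
  | fn => exact .closure hγ (consAnn_bot _)
  | app _ _ _ ihFun ihArg ihBody =>
    cases ihFun hγ with
    | closure hρ ha =>
      exact ihBody (consVal_upd (consVal_upd hρ _ (ihArg hγ)) _ (.closure hρ ha))
  | roll _ ih => exact .roll (ih hγ) (consAnn_bot _)
  | unroll _ ih => cases ih hγ with | roll hv _ => exact hv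
  | letT _ _ ih1 ih2 => exact ih2 (consVal_upd hγ _ (ih1 hγ))
  | nil => rename_i hv; cases hv
  | cons _ _ ihHead ihTail =>
    rename_i hγ u hu
    cases hu with
    | head => exact ihHead hγ
    | tail _ hu => exact ihTail hγ u hu

end Consistency

/-- **Consistency of expression-provenance extraction** (Theorem `expr`):
if `|γ̂|, e ⇓ v, T` then any valuation `h` consistent with `γ̂` is also consistent
with `E(T, γ̂)`. -/
theorem expr_provenance_consistent
    (ps : String → List Val → ℕ) (γhat : AEnv PTerm) (e : Expr) (v : Val) (T : Trace)
    (vhat : AVal PTerm) (h : Loc → Val)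
    (heval : Eval ps (eraseEnv γhat) e v T)
    (hE : EEx ps T γhat vhat)
    (hcons : ∀ x, ConsVal ps h (γhat x)) :
    ConsVal ps h vhat :=
  hE.consVal hcons

end Prov
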